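/- Let G be an abelian group and B ⊆ G. Define ≈ on B⁺ by u ≈ v iff |u| = |v|, alt(u) = alt(v), and |u|_e = |v|_e, where |w|_e counts the number of letters of w that are even in G (an element g ∈ G is even if g = 2h for some h ∈ G). Then ≈ is a congruence on B⁺ and the quotient SAS(G,B) = B⁺/≈ is a cancellative semigroup. -/
import Mathlib


/-- Alternating sum of a word: alt(b₁b₂…b_k) = b₁ - b₂ + b₃ - … -/
def altSum {G : Type*} [AddCommGroup G] : List G → G
  | [] => 0
  | a :: w => a - altSum w

open Classical in
/-- |w|_e : the number of entries of the word w that are even in G. -/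
noncomputable def evenCount {G : Type*} [AddCommGroup G] (w : List G) : ℕ :=
  w.countP (fun g => decide (∃ h : G, g = h + h))


lemma altSum_append {G : Type*} [AddCommGroup G] (u v : List G) :
    altSum (u ++ v) = altSum u + ((-1 : ℤ) ^ u.length) • altSum v := by
  induction u with
  | nil => simp [altSum]
  | cons a u ih =>
      rw [List.cons_append]
      show a - altSum (u ++ v) = _
      rw [ih, List.length_cons, pow_succ, mul_comm, mul_smul, neg_one_smul, altSum]
      abel

lemma evenCount_append {G : Type*} [AddCommGroup G] (u v : List G) :
    evenCount (u ++ v) = evenCount u + evenCount v := by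
  simp [evenCount, List.countP_append]

/-- The relation ≈ (same length, same alternating sum, same number of even
entries) is a congruence on B⁺ and the quotient SAS(G,B) is cancellative. -/
theorem stmt_2 {G : Type*} [AddCommGroup G] (B : Set G)
    (r : List G → List G → Prop)
    (hr : ∀ u v, r u v ↔
      u.length = v.length ∧ altSum u = altSum v ∧ evenCount u = evenCount v) :
    (∀ u : List G, u ≠ [] → (∀ x ∈ u, x ∈ B) → r u u) ∧
    (∀ u v : List G, r u v → r v u) ∧
    (∀ u v w : List G, r u v → r v w → r u w) ∧
    (∀ u v u' v' : List G, (∀ x ∈ u, x ∈ B) → (∀ x ∈ v, x ∈ B) →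
      (∀ x ∈ u', x ∈ B) → (∀ x ∈ v', x ∈ B) →
      r u v → r u' v' → r (u ++ u') (v ++ v')) ∧
    (∀ x y z : List G, x ≠ [] → y ≠ [] → z ≠ [] →
      (∀ a ∈ x, a ∈ B) → (∀ a ∈ y, a ∈ B) → (∀ a ∈ z, a ∈ B) →
      (r (x ++ z) (y ++ z) → r x y) ∧ (r (z ++ x) (z ++ y) → r x y)) := by
  refine ⟨fun u _ _ => (hr u u).2 ⟨rfl, rfl, rfl⟩,
    fun u v h => ?_, fun u v w h1 h2 => ?_, fun u v u' v' _ _ _ _ h1 h2 => ?_,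
    fun x y z _ _ _ _ _ _ => ⟨fun h => ?_, fun h => ?_⟩⟩
  · obtain ⟨h1, h2, h3⟩ := (hr u v).1 h
    exact (hr v u).2 ⟨h1.symm, h2.symm, h3.symm⟩
  · obtain ⟨g1, g2, g3⟩ := (hr u v).1 h1
    obtain ⟨h1', h2', h3'⟩ := (hr v w).1 h2
    exact (hr u w).2 ⟨g1.trans h1', g2.trans h2', g3.trans h3'⟩
  · obtain ⟨k1, k2, k3⟩ := (hr u v).1 h1
    obtain ⟨h1', h2', h3'⟩ := (hr u' v').1 h2
    refine (hr _ _).2 ⟨by simp [k1, h1'], ?_, by simp [evenCount_append, k3, h3']⟩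
    rw [altSum_append, altSum_append, k1, k2, h2']
  · obtain ⟨h1, h2, h3⟩ := (hr _ _).1 h
    simp only [List.length_append] at h1
    have hlen : x.length = y.length := by omega
    refine (hr x y).2 ⟨hlen, ?_, ?_⟩
    · rw [altSum_append, altSum_append, hlen] at h2
      exact add_right_cancel h2
    · simp only [evenCount_append] at h3; omega
  · obtain ⟨h1, h2, h3⟩ := (hr _ _).1 h
    simp only [List.length_append] at h1
    have hlen : x.length = y.length := by omega
    refine (hr x y).2 ⟨hlen, ?_, ?_⟩
    · rw [altSum_append, altSum_append] at h2
      have h4 := congrArg (fun g => ((-1 : ℤ) ^ z.length) • g) (add_left_cancel h2)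
      simpa [smul_smul, ← pow_add, Even.neg_one_pow ⟨z.length, rfl⟩] using h4
    · simp only [evenCount_append] at h3; omega
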